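/- For every group element σ of the alternating group A_4 acting on {1,2,3,4}, define A(σ) = {{0,σ(1)},{σ(2),σ(3)}} and B(σ) = {{σ(1),σ(4)}} as matchings on {0,1,2,3,4}. Then for σ, τ ∈ A_4, the unique path starting at vertex 0 in the graph A(σ) ∪ B(τ) has its other endpoint equal to σ(4) (a vertex not covered by A(σ)) if and only if B(σ) = B(τ); moreover, there are exactly 6 distinct matchings B(σ), σ ∈ A_4. -/
import Mathlib
set_option maxHeartbeats 1000000


/-- The simple graph on `V` whose edges are the pairs of a union of matchings. -/
def matchingGraph {V : Type*} (E : Set (Finset V)) : SimpleGraph V :=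
  SimpleGraph.fromRel (fun x y => ∃ e ∈ E, x ∈ e ∧ y ∈ e)

/-- Alice's configuration `A(σ) = {{0, σ(1)}, {σ(2), σ(3)}}` on `{0,…,4}`, where the
points `1,2,3,4` of `σ : Perm (Fin 4)` are embedded into `Fin 5` via `Fin.succ`. -/
def AliceConf (σ : Equiv.Perm (Fin 4)) : Set (Finset (Fin 5)) :=
  {{0, (σ 0).succ}, {(σ 1).succ, (σ 2).succ}}

/-- Bob's configuration `B(σ) = {{σ(1), σ(4)}}`. -/
def BobConf (σ : Equiv.Perm (Fin 4)) : Set (Finset (Fin 5)) :=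
  {{(σ 0).succ, (σ 3).succ}}

def G' (a b c x y : Fin 5) : SimpleGraph (Fin 5) :=
  SimpleGraph.fromRel (fun u v =>
    (u ∈ ({0, a} : Finset (Fin 5)) ∧ v ∈ ({0, a} : Finset (Fin 5))) ∨
    (u ∈ ({b, c} : Finset (Fin 5)) ∧ v ∈ ({b, c} : Finset (Fin 5))) ∨
    (u ∈ ({x, y} : Finset (Fin 5)) ∧ v ∈ ({x, y} : Finset (Fin 5))))

lemma graph_eq (σ τ : Equiv.Perm (Fin 4)) :
    matchingGraph (AliceConf σ ∪ BobConf τ) =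
      G' (σ 0).succ (σ 1).succ (σ 2).succ (τ 0).succ (τ 3).succ := by
  ext u v
  simp only [matchingGraph, G', AliceConf, BobConf, SimpleGraph.fromRel_adj,
    Set.mem_union, Set.mem_insert_iff, Set.mem_singleton_iff, exists_eq_or_imp,
    exists_eq_left]
  simp only [or_assoc, exists_eq_or_imp, exists_eq_left]

lemma G'_adj {a b c x y u v : Fin 5} :
    (G' a b c x y).Adj u v ↔ u ≠ v ∧
      (((u = 0 ∨ u = a) ∧ (v = 0 ∨ v = a)) ∨
       ((u = b ∨ u = c) ∧ (v = b ∨ v = c)) ∨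
       ((u = x ∨ u = y) ∧ (v = x ∨ v = y))) := by
  simp only [G', SimpleGraph.fromRel_adj, Finset.mem_insert, Finset.mem_singleton]
  constructor
  · rintro ⟨h1, h2 | h2⟩
    · exact ⟨h1, h2⟩
    · exact ⟨h1, by rcases h2 with ⟨p, q⟩ | ⟨p, q⟩ | ⟨p, q⟩ <;>
        [exact Or.inl ⟨q, p⟩; exact Or.inr (Or.inl ⟨q, p⟩); exact Or.inr (Or.inr ⟨q, p⟩)]⟩
  · rintro ⟨h1, h2⟩
    exact ⟨h1, Or.inl h2⟩

lemma mem_of_reachable {V : Type*} {G : SimpleGraph V} {S : Set V}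
    (hS : ∀ ⦃u v : V⦄, u ∈ S → G.Adj u v → v ∈ S) {u v : V}
    (h : G.Reachable u v) (hu : u ∈ S) : v ∈ S := by
  obtain ⟨w⟩ := h
  induction w with
  | nil => exact hu
  | cons h p ih => exact ih (hS hu h)

lemma key (a b c d x y : Fin 5)
    (h0a : a ≠ 0) (h0b : b ≠ 0) (h0c : c ≠ 0) (h0d : d ≠ 0)
    (hab : a ≠ b) (hac : a ≠ c) (had : a ≠ d) (hbc : b ≠ c) (hbd : b ≠ d) (hcd : c ≠ d)
    (hx : x = a ∨ x = b ∨ x = c ∨ x = d) (hy : y = a ∨ y = b ∨ y = c ∨ y = d)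
    (hxy : x ≠ y) :
    ((G' a b c x y).Reachable 0 d ∧ d ≠ 0 ∧
        ((G' a b c x y).neighborSet d).ncard ≤ 1) ↔
      ({x, y} : Finset (Fin 5)) = {a, d} := by
  constructor
  · rintro ⟨hreach, hd0, -⟩
    have hdxy : d = x ∨ d = y := by
      by_contra hdm
      push_neg at hdm
      have noAdj : ∀ z, ¬ (G' a b c x y).Adj d z := by
        intro z hz
        rw [G'_adj] at hz
        obtain ⟨-, ⟨h1, -⟩ | ⟨h1, -⟩ | ⟨h1, -⟩⟩ := hz
        · rcases h1 with h1 | h1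
          · exact h0d h1
          · exact had h1.symm
        · rcases h1 with h1 | h1
          · exact hbd h1.symm
          · exact hcd h1.symm
        · rcases h1 with h1 | h1
          · exact hdm.1 h1
          · exact hdm.2 h1
      obtain ⟨w⟩ := hreach.symm
      cases w with
      | nil => exact hd0 rfl
      | cons h p => exact noAdj _ h
    have haxy : a = x ∨ a = y := by
      by_contra ham
      push_neg at ham
      have h0x : x ≠ 0 := by rcases hx with rfl | rfl | rfl | rfl <;> assumption
      have h0y : y ≠ 0 := by rcases hy with rfl | rfl | rfl | rfl <;> assumption
      have hclosed : ∀ ⦃u v : Fin 5⦄, u ∈ ({0, a} : Set (Fin 5)) →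
          (G' a b c x y).Adj u v → v ∈ ({0, a} : Set (Fin 5)) := by
        intro u v hu hv
        rw [G'_adj] at hv
        obtain ⟨-, ⟨h1, h2⟩ | ⟨h1, h2⟩ | ⟨h1, h2⟩⟩ := hv
        · exact h2
        · exfalso
          rcases hu with rfl | rfl
          · rcases h1 with h1 | h1
            · exact h0b h1.symm
            · exact h0c h1.symm
          · rcases h1 with h1 | h1
            · exact hab h1
            · exact hac h1
        · exfalso
          rcases hu with rfl | rfl
          · rcases h1 with h1 | h1
            · exact h0x h1.symm
            · exact h0y h1.symm
          · rcases h1 with h1 | h1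
            · exact ham.1 h1
            · exact ham.2 h1
      have hmem := mem_of_reachable hclosed hreach (by simp)
      rcases hmem with h | h
      · exact hd0 h
      · exact had h.symm
    have hsub : ({a, d} : Finset (Fin 5)) ⊆ {x, y} := by
      intro z hz
      simp only [Finset.mem_insert, Finset.mem_singleton] at hz ⊢
      rcases hz with rfl | rfl
      · exact haxy
      · exact hdxy
    refine (Finset.eq_of_subset_of_card_le hsub ?_).symm
    rw [Finset.card_insert_of_notMem (by simp [hxy]),
      Finset.card_insert_of_notMem (by simp [had])]
    simp
  · intro hE
    have hxa : a = x ∨ a = y := by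
      have : a ∈ ({x, y} : Finset (Fin 5)) := by rw [hE]; simp
      simpa using this
    have hxd : d = x ∨ d = y := by
      have : d ∈ ({x, y} : Finset (Fin 5)) := by rw [hE]; simp
      simpa using this
    have h1 : (G' a b c x y).Adj 0 a := by
      rw [G'_adj]
      exact ⟨Ne.symm h0a, Or.inl ⟨Or.inl rfl, Or.inr rfl⟩⟩
    have h2 : (G' a b c x y).Adj a d := by
      rw [G'_adj]
      exact ⟨had, Or.inr (Or.inr ⟨hxa, hxd⟩)⟩
    refine ⟨h1.reachable.trans h2.reachable, h0d, ?_⟩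
    have hsub : (G' a b c x y).neighborSet d ⊆ {a} := by
      intro z hz
      rw [SimpleGraph.mem_neighborSet, G'_adj] at hz
      obtain ⟨hdz, ⟨h3, h4⟩ | ⟨h3, h4⟩ | ⟨h3, h4⟩⟩ := hz
      · exfalso
        rcases h3 with h3 | h3
        · exact h0d h3
        · exact had h3.symm
      · exfalso
        rcases h3 with h3 | h3
        · exact hbd h3.symm
        · exact hcd h3.symm
      · have hz' : z ∈ ({x, y} : Finset (Fin 5)) := by
          simp only [Finset.mem_insert, Finset.mem_singleton]
          exact h4
        rw [hE] at hz'
        simp only [Finset.mem_insert, Finset.mem_singleton] at hz'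
        rcases hz' with rfl | rfl
        · rfl
        · exact absurd rfl hdz
    calc ((G' a b c x y).neighborSet d).ncard ≤ ({a} : Set (Fin 5)).ncard :=
          Set.ncard_le_ncard hsub (Set.finite_singleton a)
      _ = 1 := Set.ncard_singleton a

lemma succ_ne (σ : Equiv.Perm (Fin 4)) {i j : Fin 4} (h : i ≠ j) :
    (σ i).succ ≠ (σ j).succ := fun he => h (σ.injective (Fin.succ_injective _ he))


/-- For `σ, τ` in the alternating group `A_4`: the vertex `σ(4)` is not covered by
`A(σ)`, the unique path starting at `0` in the graph `A(σ) ∪ B(τ)` has its other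
endpoint equal to `σ(4)` iff `B(σ) = B(τ)`, and the group action produces exactly
6 distinct configurations `B(σ)`. -/
theorem alternating_group_symmetry :
    (∀ σ ∈ alternatingGroup (Fin 4), ¬ ∃ e ∈ AliceConf σ, (σ 3).succ ∈ e) ∧
    (∀ σ ∈ alternatingGroup (Fin 4), ∀ τ ∈ alternatingGroup (Fin 4),
      (((matchingGraph (AliceConf σ ∪ BobConf τ)).Reachable 0 ((σ 3).succ) ∧
          (σ 3).succ ≠ 0 ∧
          ((matchingGraph (AliceConf σ ∪ BobConf τ)).neighborSet ((σ 3).succ)).ncard ≤ 1)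
        ↔ BobConf σ = BobConf τ)) ∧
    Set.ncard {b : Set (Finset (Fin 5)) | ∃ σ ∈ alternatingGroup (Fin 4), BobConf σ = b}
      = 6 := by
  refine ⟨?_, ?_, ?_⟩
  · rintro σ - ⟨e, he, hmem⟩
    simp only [AliceConf, Set.mem_insert_iff, Set.mem_singleton_iff] at he
    rcases he with rfl | rfl <;>
      simp only [Finset.mem_insert, Finset.mem_singleton] at hmem
    · rcases hmem with h | h
      · exact Fin.succ_ne_zero _ h
      · exact succ_ne σ (by decide) h
    · rcases hmem with h | h
      · exact succ_ne σ (by decide) h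
      · exact succ_ne σ (by decide) h
  · rintro σ - τ -
    rw [graph_eq]
    have range4 : ∀ v : Fin 4, v.succ = (σ 0).succ ∨ v.succ = (σ 1).succ ∨
        v.succ = (σ 2).succ ∨ v.succ = (σ 3).succ := by
      intro v
      have h4 : ∀ i : Fin 4, i = 0 ∨ i = 1 ∨ i = 2 ∨ i = 3 := by decide
      have hv : v = σ (σ⁻¹ v) := (Equiv.apply_symm_apply σ v).symm
      rcases h4 (σ⁻¹ v) with h | h | h | h <;> rw [hv, h] <;> tauto
    rw [key (σ 0).succ (σ 1).succ (σ 2).succ (σ 3).succ (τ 0).succ (τ 3).succ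
      (Fin.succ_ne_zero _) (Fin.succ_ne_zero _) (Fin.succ_ne_zero _) (Fin.succ_ne_zero _)
      (succ_ne σ (by decide)) (succ_ne σ (by decide)) (succ_ne σ (by decide))
      (succ_ne σ (by decide)) (succ_ne σ (by decide)) (succ_ne σ (by decide))
      (range4 _) (range4 _) (succ_ne τ (by decide))]
    simp only [BobConf, Set.singleton_eq_singleton_iff]
    exact eq_comm
  · have pairMem : ∀ i j : Fin 4, i ≠ j → ({i.succ, j.succ} : Finset (Fin 5)) ∈
        ({{1,2},{1,3},{1,4},{2,3},{2,4},{3,4}} : Finset (Finset (Fin 5))) := by decide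
    have hS : {b : Set (Finset (Fin 5)) | ∃ σ ∈ alternatingGroup (Fin 4), BobConf σ = b} =
        (fun f => ({f} : Set (Finset (Fin 5)))) ''
          (↑({{1,2},{1,3},{1,4},{2,3},{2,4},{3,4}} : Finset (Finset (Fin 5)))) := by
      ext b
      constructor
      · rintro ⟨σ, hσ, rfl⟩
        exact ⟨{(σ 0).succ, (σ 3).succ},
          Finset.mem_coe.mpr (pairMem _ _ (fun h => by simpa using σ.injective h)), rfl⟩
      · rintro ⟨f, hf, rfl⟩
        simp only [Finset.coe_insert, Set.mem_insert_iff, Finset.coe_singleton,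
          Set.mem_singleton_iff] at hf
        rcases hf with rfl | rfl | rfl | rfl | rfl | rfl
        · exact ⟨Equiv.swap 1 2 * Equiv.swap 2 3,
            by rw [Equiv.Perm.mem_alternatingGroup]; decide,
            congrArg (fun t => ({t} : Set (Finset (Fin 5)))) (by decide)⟩
        · exact ⟨Equiv.swap 2 1 * Equiv.swap 1 3,
            by rw [Equiv.Perm.mem_alternatingGroup]; decide,
            congrArg (fun t => ({t} : Set (Finset (Fin 5)))) (by decide)⟩
        · exact ⟨1, by rw [Equiv.Perm.mem_alternatingGroup]; decide,
            congrArg (fun t => ({t} : Set (Finset (Fin 5)))) (by decide)⟩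
        · exact ⟨Equiv.swap 0 1 * Equiv.swap 2 3,
            by rw [Equiv.Perm.mem_alternatingGroup]; decide,
            congrArg (fun t => ({t} : Set (Finset (Fin 5)))) (by decide)⟩
        · exact ⟨Equiv.swap 0 1 * Equiv.swap 1 2,
            by rw [Equiv.Perm.mem_alternatingGroup]; decide,
            congrArg (fun t => ({t} : Set (Finset (Fin 5)))) (by decide)⟩
        · exact ⟨Equiv.swap 0 2 * Equiv.swap 2 1,
            by rw [Equiv.Perm.mem_alternatingGroup]; decide,
            congrArg (fun t => ({t} : Set (Finset (Fin 5)))) (by decide)⟩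
    rw [hS, Set.ncard_image_of_injective _
      (fun p q h => Set.singleton_eq_singleton_iff.mp h), Set.ncard_coe_finset]
    decide
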